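/- Consider an interconnected system with control inputs, true dynamics f_i and surrogate dynamics f̃_i (both Lipschitz with constants L_{f_i}, L_{f̃_i}), closed by controllers π_i that are Lipschitz with constants L_{π_i}, and Lyapunov functions V_i Lipschitz with constants L_{V_i}. For each i, let 𝒟_i be a rectangular grid with per-dimension step sizes Δ in the bounded closed-loop operating region (so every admissible point is within Euclidean distance ½|Δ|₂ of 𝒟_i), let ε̂_i be the maximum over the grid of the norm of the closed-loop model mismatch, and set ε_i = ε̂_i + ½(L_{f_i} + L_{f̃_i})(1 + L_{π_i})|Δ|₂. Suppose there exist ε ∈ (0,1), ψ ≥ 0, class-𝒦_∞ functions α1, α2 with α1(|x|₂) ≤ V_i(x) ≤ α2(|x|₂), nonnegative gains γ_{i,j} with max_{i∈𝒩} Σ_{j∈ℰ_i∪{i}} γ_{i,j} ≤ 1−ε, and margins δ_i ≥ L_{V_i} ε_i > 0 such that V_i(f̃_i(x_i, {x_j}_{j∈ℰ_i}, π_i(x_i, {x_j}_{j∈ℰ_i}), d_i)) ≤ Σ_{j∈ℰ_i∪{i}} γ_{i,j} V_j(x_j) + ψ|d_i|₂ − δ_i for all admissible states and disturbances. Then the true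 closed-loop system satisfies the decremental inequality V_i(f_i(x_i, {x_j}_{j∈ℰ_i}, π_i(x_i, {x_j}_{j∈ℰ_i}), d_i)) ≤ Σ_{j∈ℰ_i∪{i}} γ_{i,j} V_j(x_j) + ψ|d_i|₂, and hence the true closed-loop interconnected system is scalably input-to-state stable. -/

import Mathlib

open scoped NNReal
open Filter

noncomputable section

/-- `ℝ^m` with the Euclidean norm. -/
abbrev Evec (m : ℕ) : Type := EuclideanSpace ℝ (Fin m)

/-- A class-𝒦 function: continuous, strictly increasing, vanishing at `0`. -/
def IsClassK (α : ℝ≥0 → ℝ≥0) : Prop :=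
  Continuous α ∧ StrictMono α ∧ α 0 = 0

/-- A class-𝒦∞ function: class 𝒦 and unbounded. -/
def IsClassKInfty (α : ℝ≥0 → ℝ≥0) : Prop :=
  IsClassK α ∧ Tendsto α atTop atTop

/-- A class-𝒦ℒ function. -/
def IsClassKL (β : ℝ≥0 → ℕ → ℝ≥0) : Prop :=
  (∀ k : ℕ, IsClassK fun s => β s k) ∧
    ∀ s : ℝ≥0, Tendsto (fun k => β s k) atTop (nhds 0)

/-- The local observation of agent `i`: the tuple `(x_i, {x_j}_{j ∈ nbr i})`, with
the Euclidean norm of the concatenated vector. -/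
def Obs {ι : Type} (n : ι → ℕ) (nbr : ι → Finset ι) (i : ι) : Type :=
  WithLp 2 (Evec (n i) × PiLp 2 fun j : {j // j ∈ nbr i} => Evec (n j.1))

noncomputable instance {ι : Type} (n : ι → ℕ) (nbr : ι → Finset ι) (i : ι) :
    NormedAddCommGroup (Obs n nbr i) := by
  unfold Obs; infer_instance

/-- The open-loop input space of agent `i`: `(x_i, {x_j}_{j ∈ nbr i}, u_i, d_i)`,
with the Euclidean norm of the concatenated vector. -/
def FIn {ι : Type} (n q p : ι → ℕ) (nbr : ι → Finset ι) (i : ι) : Type :=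
  WithLp 2 (Obs n nbr i × WithLp 2 (Evec (q i) × Evec (p i)))

noncomputable instance {ι : Type} (n q p : ι → ℕ) (nbr : ι → Finset ι) (i : ι) :
    NormedAddCommGroup (FIn n q p nbr i) := by
  unfold FIn; infer_instance

/-- The closed-loop input space of agent `i`: `z = (x_i, {x_j}_{j ∈ nbr i}, d_i)`,
with the Euclidean norm of the concatenated vector. -/
def Zcl {ι : Type} (n p : ι → ℕ) (nbr : ι → Finset ι) (i : ι) : Type :=
  WithLp 2 (Obs n nbr i × Evec (p i))

noncomputable instance {ι : Type} (n p : ι → ℕ) (nbr : ι → Finset ι) (i : ι) :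
    NormedAddCommGroup (Zcl n p nbr i) := by
  unfold Zcl; infer_instance

/-- The local observation of agent `i` extracted from a global state profile. -/
def obsOf {ι : Type} (n : ι → ℕ) (nbr : ι → Finset ι) (i : ι)
    (x : ∀ j : ι, Evec (n j)) : Obs n nbr i :=
  (WithLp.equiv 2 _).symm
    (x i, (WithLp.equiv 2 _).symm (fun j : {j // j ∈ nbr i} => x j.1))

/-- Assembling the closed-loop input `z = (x_i, {x_j}_{j ∈ nbr i}, d_i)`. -/
def packZ {ι : Type} (n p : ι → ℕ) (nbr : ι → Finset ι) (i : ι)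
    (x : ∀ j : ι, Evec (n j)) (d : Evec (p i)) : Zcl n p nbr i :=
  (WithLp.equiv 2 _).symm (obsOf n nbr i x, d)

/-- The closed-loop map of agent `i`: `z = (o, d) ↦ fdyn i (o, π i o, d)`. -/
def clMap {ι : Type} (n q p : ι → ℕ) (nbr : ι → Finset ι)
    (fdyn : ∀ i : ι, FIn n q p nbr i → Evec (n i))
    (π : ∀ i : ι, Obs n nbr i → Evec (q i)) (i : ι)
    (z : Zcl n p nbr i) : Evec (n i) :=
  let oz := WithLp.equiv 2 _ z
  fdyn i ((WithLp.equiv 2 _).symm (oz.1, (WithLp.equiv 2 _).symm (π i oz.1, oz.2)))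

/-!
On the grid the true and surrogate closed loops differ by at most `ε̂ᵢ`. Both closed-loop maps
are Lipschitz (the graph map `(o, d) ↦ (o, π o, d)` is `(1 + L_π)`-Lipschitz for the Euclidean
product norms), so on the whole region they differ by at most
`εᵢ = ε̂ᵢ + (L_f + L_f̃)(1 + L_π) Δ / 2`, which changes `Vᵢ` by at most `L_V εᵢ ≤ δᵢ`; the margin
absorbs this and the decremental inequality transfers to the true system.

For stability, `W k = maxᵢ Vᵢ(x_{i,k})` obeys `W (k+1) ≤ (1 - ε) W k + ψ C`, hence
`W k ≤ (1 - ε)ᵏ W 0 + ψ C / ε`. The sandwich bounds and the class-𝒦 inverse of `α₁` turn this into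
the estimate with `β s k = α₁⁻¹ ((1 - ε)ᵏ · 2 α₂ s)` and `μ C = α₁⁻¹ (2 (ψ + 1) C / ε)`.
-/

open Finset Function

theorem IsClassK.comp {g h : ℝ≥0 → ℝ≥0} (hg : IsClassK g) (hh : IsClassK h) :
    IsClassK fun s => g (h s) :=
  ⟨hg.1.comp hh.1, hg.2.1.comp hh.2.1, by simp only [hh.2.2, hg.2.2]⟩

theorem IsClassK.const_mul {α : ℝ≥0 → ℝ≥0} (hα : IsClassK α) {c : ℝ≥0} (hc : 0 < c) :
    IsClassK fun s => c * α s :=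
  ⟨continuous_const.mul hα.1, fun _ _ hst => mul_lt_mul_of_pos_left (hα.2.1 hst) hc,
    by simp only [hα.2.2, mul_zero]⟩

theorem isClassK_id : IsClassK id :=
  ⟨continuous_id, strictMono_id, rfl⟩

theorem IsClassKInfty.exists_isClassK_leftInverse {α : ℝ≥0 → ℝ≥0} (hα : IsClassKInfty α) :
    ∃ g : ℝ≥0 → ℝ≥0, IsClassK g ∧ LeftInverse g α := by
  obtain ⟨⟨hcont, hmono, hzero⟩, htop⟩ := hα
  have hsurj : Surjective α := by
    intro y
    obtain ⟨b, hb⟩ := (htop.eventually (eventually_ge_atTop y)).exists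
    obtain ⟨t, -, ht⟩ := intermediate_value_Icc (zero_le (a := b)) hcont.continuousOn
      (show y ∈ Set.Icc (α 0) (α b) from ⟨hzero.trans_le (zero_le (a := y)), hb⟩)
    exact ⟨t, ht⟩
  let e := hmono.orderIsoOfSurjective α hsurj
  exact ⟨e.symm, ⟨e.symm.continuous, e.symm.strictMono, e.symm_apply_eq.mpr hzero.symm⟩,
    e.symm_apply_apply⟩

theorem IsClassK.isClassKL_comp_pow_mul {g α : ℝ≥0 → ℝ≥0} (hg : IsClassK g) (hα : IsClassK α)
    {r : ℝ≥0} (hr₀ : 0 < r) (hr₁ : r < 1) : IsClassKL fun s k => g (r ^ k * α s) := by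
  refine ⟨fun k => hg.comp (hα.const_mul (pow_pos hr₀ k)), fun s => ?_⟩
  have hdecay : Tendsto (fun k => r ^ k * α s) atTop (nhds 0) := by
    simpa only [zero_mul] using (NNReal.tendsto_pow_atTop_nhds_zero_of_lt_one hr₁).mul_const (α s)
  simpa only [hg.2.2, comp_def] using (hg.1.tendsto 0).comp hdecay

theorem NNReal.le_pow_mul_add_div_of_le_mul_add {u : ℕ → ℝ≥0} {r ε c : ℝ≥0} (hrε : r + ε = 1)
    (hε : ε ≠ 0) (hu : ∀ k, u (k + 1) ≤ r * u k + c) (k : ℕ) : u k ≤ r ^ k * u 0 + c / ε := by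
  induction k with
  | zero => simp
  | succ k ih =>
    calc u (k + 1) ≤ r * (r ^ k * u 0 + c / ε) + c := (hu k).trans (by gcongr)
      _ = r ^ (k + 1) * u 0 + (r + ε) * (c / ε) := by
        rw [add_mul, mul_div_cancel₀ c hε]; ring
      _ = r ^ (k + 1) * u 0 + c / ε := by rw [hrε, one_mul]

theorem Monotone.map_add_le_add_map_two_mul {g : ℝ≥0 → ℝ≥0} (hg : Monotone g) (a b : ℝ≥0) :
    g (a + b) ≤ g (2 * a) + g (2 * b) := by
  have hab : a + b ≤ max (2 * a) (2 * b) := by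
    rcases le_total a b with h | h
    · exact (add_le_add_left h b).trans_eq (two_mul b).symm |>.trans (le_max_right _ _)
    · exact (add_le_add_right h a).trans_eq (two_mul a).symm |>.trans (le_max_left _ _)
  calc g (a + b) ≤ max (g (2 * a)) (g (2 * b)) := (hg hab).trans_eq hg.map_max
    _ ≤ g (2 * a) + g (2 * b) := max_le le_self_add le_add_self

theorem sum_mul_le_mul_univ_sup {ι : Type*} [Fintype ι] (s : Finset ι) {γ : ι → ℝ≥0} {r : ℝ≥0}
    (hγ : ∑ j ∈ s, γ j ≤ r) (v : ι → ℝ≥0) : ∑ j ∈ s, γ j * v j ≤ r * univ.sup v :=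
  calc ∑ j ∈ s, γ j * v j ≤ ∑ j ∈ s, γ j * univ.sup v :=
        sum_le_sum fun j _ => by gcongr; exact le_sup (mem_univ j)
    _ = (∑ j ∈ s, γ j) * univ.sup v := (sum_mul ..).symm
    _ ≤ r * univ.sup v := by gcongr

theorem nnnorm_le_of_lyapunov_contraction {ι : Type*} [Fintype ι] {E : ι → Type*}
    [∀ i, NNNorm (E i)] {V : ∀ i, E i → ℝ≥0} {α₁ α₂ g : ℝ≥0 → ℝ≥0} (hgα : LeftInverse g α₁)
    (hg : Monotone g) (hα₂ : Monotone α₂) (hV : ∀ i x, α₁ ‖x‖₊ ≤ V i x ∧ V i x ≤ α₂ ‖x‖₊)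
    {r ε c : ℝ≥0} (hrε : r + ε = 1) (hε : ε ≠ 0) {x : ℕ → ∀ i, E i}
    (hx : ∀ k i, V i (x (k + 1) i) ≤ r * univ.sup (fun j => V j (x k j)) + c) (k : ℕ) (i : ι) :
    ‖x k i‖₊ ≤ g (r ^ k * (2 * α₂ (univ.sup fun j => ‖x 0 j‖₊))) + g (2 * (c / ε)) := by
  set W : ℕ → ℝ≥0 := fun k => univ.sup fun j => V j (x k j)
  set M := univ.sup fun j => ‖x 0 j‖₊
  have hW : W k ≤ r ^ k * W 0 + c / ε :=
    NNReal.le_pow_mul_add_div_of_le_mul_add hrε hε (fun k => Finset.sup_le fun i _ => hx k i) k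
  have hW₀ : W 0 ≤ α₂ M := Finset.sup_le fun j _ =>
    (hV j _).2.trans (hα₂ (le_sup (f := fun j => ‖x 0 j‖₊) (mem_univ j)))
  calc ‖x k i‖₊ = g (α₁ ‖x k i‖₊) := (hgα _).symm
    _ ≤ g (r ^ k * α₂ M + c / ε) :=
        hg <| (hV i _).1.trans <| (le_sup (f := fun j => V j (x k j)) (mem_univ i)).trans <|
          hW.trans (by gcongr)
    _ ≤ g (2 * (r ^ k * α₂ M)) + g (2 * (c / ε)) := hg.map_add_le_add_map_two_mul _ _
    _ = g (r ^ k * (2 * α₂ M)) + g (2 * (c / ε)) := by rw [mul_left_comm]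

theorem LipschitzWith.withLp_prod_graph {α β γ : Type*} [SeminormedAddCommGroup α]
    [SeminormedAddCommGroup β] [SeminormedAddCommGroup γ] {h : α → β} {K : ℝ≥0}
    (hh : LipschitzWith K h) :
    LipschitzWith (1 + K) fun z : WithLp 2 (α × γ) =>
      WithLp.toLp 2 (z.fst, WithLp.toLp 2 (h z.fst, z.snd)) := by
  refine LipschitzWith.of_dist_le_mul fun z z' => ?_
  set a := dist z.fst z'.fst
  set b := dist (h z.fst) (h z'.fst)
  set c := dist z.snd z'.snd
  have hb : b ≤ K * a := hh.dist_le_mul _ _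
  have ha : a ≤ √(a ^ 2 + c ^ 2) := Real.le_sqrt_of_sq_le (le_add_of_nonneg_right (sq_nonneg c))
  simp only [WithLp.prod_dist_eq_of_L2, WithLp.toLp_fst, WithLp.toLp_snd]
  rw [Real.sq_sqrt (by positivity)]
  calc √(a ^ 2 + (b ^ 2 + c ^ 2)) ≤ √(a ^ 2 + c ^ 2) + b := by
        rw [Real.sqrt_le_left (by positivity), add_sq, Real.sq_sqrt (by positivity)]
        nlinarith [Real.sqrt_nonneg (a ^ 2 + c ^ 2), dist_nonneg (x := h z.fst) (y := h z'.fst)]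
    _ ≤ (1 + K) * √(a ^ 2 + c ^ 2) := by
        have := mul_le_mul_of_nonneg_left ha K.coe_nonneg
        linarith

theorem LipschitzWith.dist_le_of_forall_near_dist_le {X Y : Type*} [PseudoMetricSpace X]
    [PseudoMetricSpace Y] {F G : X → Y} {KF KG : ℝ≥0} (hF : LipschitzWith KF F)
    (hG : LipschitzWith KG G) {D : Set X} {ε r : ℝ} (hD : ∀ z ∈ D, dist (F z) (G z) ≤ ε)
    {z : X} (hz : ∃ z' ∈ D, dist z z' ≤ r) : dist (F z) (G z) ≤ ε + (KF + KG) * r := by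
  obtain ⟨z', hz'D, hzz'⟩ := hz
  calc dist (F z) (G z) ≤ dist (F z) (F z') + dist (F z') (G z') + dist (G z') (G z) :=
        dist_triangle4 _ _ _ _
    _ ≤ KF * r + ε + KG * r := by
        have hFz := (hF.dist_le_mul z z').trans (mul_le_mul_of_nonneg_left hzz' KF.coe_nonneg)
        have hGz := (hG.dist_le_mul z' z).trans
          (mul_le_mul_of_nonneg_left ((dist_comm z' z).trans_le hzz') KG.coe_nonneg)
        linarith [hD z' hz'D]
    _ = ε + (KF + KG) * r := by ring

theorem LipschitzWith.le_add_mul_of_dist_le {Y : Type*} [PseudoMetricSpace Y] {V : Y → ℝ≥0}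
    {K : ℝ≥0} (hV : LipschitzWith K V) {a b : Y} {e : ℝ≥0} (hab : dist a b ≤ e) :
    V a ≤ V b + K * e := by
  have hVℝ : (V a : ℝ) ≤ V b + K * dist a b :=
    (LipschitzWith.subtype_val _ |>.comp hV |>.weaken (one_mul K).le).le_add_mul a b
  rw [← NNReal.coe_le_coe, NNReal.coe_add, NNReal.coe_mul]
  exact hVℝ.trans (by gcongr)

theorem clMap_lipschitzWith {ι : Type} (n q p : ι → ℕ) (nbr : ι → Finset ι)
    (fdyn : ∀ i : ι, FIn n q p nbr i → Evec (n i)) (π : ∀ i : ι, Obs n nbr i → Evec (q i))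
    (i : ι) {Lf Lπ : ℝ≥0} (hLf : LipschitzWith Lf (fdyn i)) (hLπ : LipschitzWith Lπ (π i)) :
    LipschitzWith (Lf * (1 + Lπ)) (clMap n q p nbr fdyn π i) :=
  hLf.comp hLπ.withLp_prod_graph

theorem clMap_lyapunov_le_surrogate_add {ι : Type} (n q p : ι → ℕ) (nbr : ι → Finset ι)
    (f ftil : ∀ i : ι, FIn n q p nbr i → Evec (n i)) (π : ∀ i : ι, Obs n nbr i → Evec (q i))
    (i : ι) {Lf Lftil Lπ LV : ℝ≥0} (hLf : LipschitzWith Lf (f i))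
    (hLftil : LipschitzWith Lftil (ftil i)) (hLπ : LipschitzWith Lπ (π i))
    {V : Evec (n i) → ℝ≥0} (hLV : LipschitzWith LV V) {𝒟 : Set (Zcl n p nbr i)} {εhat Δ : ℝ≥0}
    (hgrid : ∀ z ∈ 𝒟, dist (clMap n q p nbr f π i z) (clMap n q p nbr ftil π i z) ≤ εhat)
    {z : Zcl n p nbr i} (hz : ∃ z' ∈ 𝒟, dist z z' ≤ (Δ : ℝ) / 2) :
    V (clMap n q p nbr f π i z) ≤
      V (clMap n q p nbr ftil π i z) + LV * (εhat + (Lf + Lftil) * (1 + Lπ) * Δ / 2) := by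
  refine hLV.le_add_mul_of_dist_le ?_
  calc dist (clMap n q p nbr f π i z) (clMap n q p nbr ftil π i z)
      ≤ εhat + (↑(Lf * (1 + Lπ)) + ↑(Lftil * (1 + Lπ))) * ((Δ : ℝ) / 2) :=
        (clMap_lipschitzWith n q p nbr f π i hLf hLπ).dist_le_of_forall_near_dist_le
          (clMap_lipschitzWith n q p nbr ftil π i hLftil hLπ) hgrid hz
    _ = ↑(εhat + (Lf + Lftil) * (1 + Lπ) * Δ / 2) := by push_cast; ring

theorem robust_closed_loop_sISS_verification_general
    {ι : Type} [Fintype ι] [DecidableEq ι]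
    (n q p : ι → ℕ) (nbr : ι → Finset ι)
    (f ftil : ∀ i : ι, FIn n q p nbr i → Evec (n i))
    (π : ∀ i : ι, Obs n nbr i → Evec (q i))
    (Lf Lftil Lπ LV : ι → ℝ≥0)
    (hLf : ∀ i : ι, LipschitzWith (Lf i) (f i))
    (hLftil : ∀ i : ι, LipschitzWith (Lftil i) (ftil i))
    (hLπ : ∀ i : ι, LipschitzWith (Lπ i) (π i))
    (V : ∀ i : ι, Evec (n i) → ℝ≥0)
    (hLV : ∀ i : ι, LipschitzWith (LV i) (V i))
    (𝒵 𝒟 : ∀ i : ι, Set (Zcl n p nbr i))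
    (Δ : ℝ≥0)
    (hcover : ∀ i : ι, ∀ z ∈ 𝒵 i, ∃ z' ∈ 𝒟 i, dist z z' ≤ (Δ : ℝ) / 2)
    (εhat : ι → ℝ≥0)
    (hgrid : ∀ i : ι, ∀ z ∈ 𝒟 i,
      dist (clMap n q p nbr f π i z) (clMap n q p nbr ftil π i z) ≤ (εhat i : ℝ))
    (δ : ι → ℝ≥0)
    (hδ : ∀ i : ι, LV i * (εhat i + (Lf i + Lftil i) * (1 + Lπ i) * Δ / 2) ≤ δ i)
    (ε : ℝ≥0) (hε0 : 0 < ε) (hε1 : ε < 1) (ψ : ℝ≥0)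
    (α₁ α₂ : ℝ≥0 → ℝ≥0) (hα₁ : IsClassKInfty α₁) (hα₂ : IsClassKInfty α₂)
    (γ : ι → ι → ℝ≥0)
    (hsg : ∀ i : ι, ∑ j ∈ insert i (nbr i), γ i j ≤ 1 - ε)
    (hsandwich : ∀ (i : ι) (x : Evec (n i)), α₁ ‖x‖₊ ≤ V i x ∧ V i x ≤ α₂ ‖x‖₊)
    -- strengthened decremental condition for the surrogate closed loop on `𝒵 i`
    (hdectil : ∀ (i : ι) (x : ∀ j : ι, Evec (n j)) (d : Evec (p i)),
      packZ n p nbr i x d ∈ 𝒵 i →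
      V i (clMap n q p nbr ftil π i (packZ n p nbr i x d)) + δ i ≤
        ∑ j ∈ insert i (nbr i), γ i j * V j (x j) + ψ * ‖d‖₊) :
    -- the decremental condition holds for the true closed loop on `𝒵 i` …
    (∀ (i : ι) (x : ∀ j : ι, Evec (n j)) (d : Evec (p i)),
      packZ n p nbr i x d ∈ 𝒵 i →
      V i (clMap n q p nbr f π i (packZ n p nbr i x d)) ≤
        ∑ j ∈ insert i (nbr i), γ i j * V j (x j) + ψ * ‖d‖₊) ∧
    -- … and hence the true closed-loop system is scalably input-to-state stable
    (∃ β : ℝ≥0 → ℕ → ℝ≥0, ∃ μ : ℝ≥0 → ℝ≥0, IsClassKL β ∧ IsClassK μ ∧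
      ∀ (x : ℕ → ∀ j : ι, Evec (n j)) (d : ℕ → ∀ i : ι, Evec (p i)),
        (∀ (k : ℕ) (i : ι), packZ n p nbr i (x k) (d k i) ∈ 𝒵 i) →
        (∀ (k : ℕ) (i : ι),
          x (k + 1) i = clMap n q p nbr f π i (packZ n p nbr i (x k) (d k i))) →
        ∀ C : ℝ≥0, (∀ (k : ℕ) (i : ι), ‖d k i‖₊ ≤ C) →
        ∀ (k : ℕ) (i : ι),
          ‖x k i‖₊ ≤ β (Finset.univ.sup fun j => ‖x 0 j‖₊) k + μ C) := by
  have hdec : ∀ (i : ι) (x : ∀ j : ι, Evec (n j)) (d : Evec (p i)),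
      packZ n p nbr i x d ∈ 𝒵 i →
      V i (clMap n q p nbr f π i (packZ n p nbr i x d)) ≤
        ∑ j ∈ insert i (nbr i), γ i j * V j (x j) + ψ * ‖d‖₊ := fun i x d hz =>
    (clMap_lyapunov_le_surrogate_add n q p nbr f ftil π i (hLf i) (hLftil i) (hLπ i) (hLV i)
      (hgrid i) (hcover i _ hz) |>.trans (add_le_add_right (hδ i) _)).trans (hdectil i x d hz)
  obtain ⟨g, hg, hgα⟩ := hα₁.exists_isClassK_leftInverse
  -- `ψ + 1` rather than `ψ` keeps `μ` strictly increasing when `ψ = 0`.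
  refine ⟨hdec, fun s k => g ((1 - ε) ^ k * (2 * α₂ s)), fun C => g (2 * (ψ + 1) / ε * C),
    hg.isClassKL_comp_pow_mul (hα₂.1.const_mul two_pos) (tsub_pos_of_lt hε1)
      (tsub_lt_self one_pos hε0),
    hg.comp (isClassK_id.const_mul (by positivity)), ?_⟩
  intro x d hx hstep C hC k i
  have hcontract :
      ∀ k i, V i (x (k + 1) i) ≤ (1 - ε) * univ.sup (fun j => V j (x k j)) + ψ * C := by
    intro k i
    rw [hstep]
    refine (hdec i (x k) (d k i) (hx k i)).trans (add_le_add ?_ (by gcongr; exact hC k i))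
    exact sum_mul_le_mul_univ_sup _ (hsg i) _
  refine (nnnorm_le_of_lyapunov_contraction hgα hg.2.1.monotone hα₂.1.2.1.monotone hsandwich
    (tsub_add_cancel_of_le hε1.le) hε0.ne' hcontract k i).trans
      (add_le_add_right (hg.2.1.monotone ?_) _)
  calc 2 * (ψ * C / ε) ≤ 2 * ((ψ + 1) * C / ε) := by gcongr; exact le_self_add
    _ = 2 * (ψ + 1) / ε * C := by ring

/-- **Robust closed-loop sISS verification.** Suppose the true dynamics `f i` and
surrogate dynamics `ftil i` are Lipschitz with constants `Lf i`, `Lftil i`, the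
controllers `π i` with constants `Lπ i`, and the Lyapunov functions `V i` with
constants `LV i`. Let `𝒟 i` be a grid in the bounded closed-loop operating region
`𝒵 i` with covering radius `Δ/2`, let `εhat i` bound the closed-loop model mismatch
on the grid, and set `ε_i = εhat i + (Lf i + Lftil i)(1 + Lπ i) Δ / 2`. If `V`
satisfies class-𝒦∞ sandwich bounds and, with margins `δ i ≥ LV i * ε_i > 0`, the
strengthened decremental condition holds for the surrogate closed loop on `𝒵 i`,
then the decremental condition holds for the true closed loop on `𝒵 i`, and hence
the true closed-loop interconnected system is scalably input-to-state stable. -/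
theorem robust_closed_loop_sISS_verification
    {ι : Type} [Fintype ι] [Nonempty ι] [DecidableEq ι]
    (n q p : ι → ℕ) (nbr : ι → Finset ι)
    (f ftil : ∀ i : ι, FIn n q p nbr i → Evec (n i))
    (π : ∀ i : ι, Obs n nbr i → Evec (q i))
    (Lf Lftil Lπ LV : ι → ℝ≥0)
    (hLf : ∀ i : ι, LipschitzWith (Lf i) (f i))
    (hLftil : ∀ i : ι, LipschitzWith (Lftil i) (ftil i))
    (hLπ : ∀ i : ι, LipschitzWith (Lπ i) (π i))
    (V : ∀ i : ι, Evec (n i) → ℝ≥0)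
    (hLV : ∀ i : ι, LipschitzWith (LV i) (V i))
    (𝒵 𝒟 : ∀ i : ι, Set (Zcl n p nbr i))
    (hDZ : ∀ i : ι, 𝒟 i ⊆ 𝒵 i)
    (Δ : ℝ≥0)
    (hcover : ∀ i : ι, ∀ z ∈ 𝒵 i, ∃ z' ∈ 𝒟 i, dist z z' ≤ (Δ : ℝ) / 2)
    (εhat : ι → ℝ≥0)
    (hgrid : ∀ i : ι, ∀ z ∈ 𝒟 i,
      dist (clMap n q p nbr f π i z) (clMap n q p nbr ftil π i z) ≤ (εhat i : ℝ))
    (δ : ι → ℝ≥0)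
    (hδpos : ∀ i : ι, 0 < LV i * (εhat i + (Lf i + Lftil i) * (1 + Lπ i) * Δ / 2))
    (hδ : ∀ i : ι, LV i * (εhat i + (Lf i + Lftil i) * (1 + Lπ i) * Δ / 2) ≤ δ i)
    (ε : ℝ≥0) (hε0 : 0 < ε) (hε1 : ε < 1) (ψ : ℝ≥0)
    (α₁ α₂ : ℝ≥0 → ℝ≥0) (hα₁ : IsClassKInfty α₁) (hα₂ : IsClassKInfty α₂)
    (γ : ι → ι → ℝ≥0)
    (hsg : ∀ i : ι, ∑ j ∈ insert i (nbr i), γ i j ≤ 1 - ε)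
    (hsandwich : ∀ (i : ι) (x : Evec (n i)), α₁ ‖x‖₊ ≤ V i x ∧ V i x ≤ α₂ ‖x‖₊)
    -- strengthened decremental condition for the surrogate closed loop on `𝒵 i`
    (hdectil : ∀ (i : ι) (x : ∀ j : ι, Evec (n j)) (d : Evec (p i)),
      packZ n p nbr i x d ∈ 𝒵 i →
      V i (clMap n q p nbr ftil π i (packZ n p nbr i x d)) + δ i ≤
        ∑ j ∈ insert i (nbr i), γ i j * V j (x j) + ψ * ‖d‖₊) :
    -- the decremental condition holds for the true closed loop on `𝒵 i` …
    (∀ (i : ι) (x : ∀ j : ι, Evec (n j)) (d : Evec (p i)),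
      packZ n p nbr i x d ∈ 𝒵 i →
      V i (clMap n q p nbr f π i (packZ n p nbr i x d)) ≤
        ∑ j ∈ insert i (nbr i), γ i j * V j (x j) + ψ * ‖d‖₊) ∧
    -- … and hence the true closed-loop system is scalably input-to-state stable
    (∃ β : ℝ≥0 → ℕ → ℝ≥0, ∃ μ : ℝ≥0 → ℝ≥0, IsClassKL β ∧ IsClassK μ ∧
      ∀ (x : ℕ → ∀ j : ι, Evec (n j)) (d : ℕ → ∀ i : ι, Evec (p i)),
        (∀ (k : ℕ) (i : ι), packZ n p nbr i (x k) (d k i) ∈ 𝒵 i) →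
        (∀ (k : ℕ) (i : ι),
          x (k + 1) i = clMap n q p nbr f π i (packZ n p nbr i (x k) (d k i))) →
        ∀ C : ℝ≥0, (∀ (k : ℕ) (i : ι), ‖d k i‖₊ ≤ C) →
        ∀ (k : ℕ) (i : ι),
          ‖x k i‖₊ ≤ β (Finset.univ.sup fun j => ‖x 0 j‖₊) k + μ C) :=
  robust_closed_loop_sISS_verification_general n q p nbr f ftil π Lf Lftil Lπ LV hLf hLftil hLπ V
    hLV 𝒵 𝒟 Δ hcover εhat hgrid δ hδ ε hε0 hε1 ψ α₁ α₂ hα₁ hα₂ γ hsg hsandwich hdectil
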